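/- Let R be a subsemiring of ℝ≥0, let k ≥ 1, and let E be a finite R-labelled directed graph. Suppose e, f ∈ E¹ are edges such that no path of length k in E contains both e and f, and suppose Σ_{α∈S_e} ct_{∖e}(α) ≥ Σ_{β∈S_f} ct_{∖f}(β), where S_e and S_f are the sets of paths of length k in E containing e and f respectively, and ct_{∖e}(α) denotes the product of the labels of the edges of α other than the occurrence of e. Let E' be the R-labelled directed graph obtained from E by deleting the edge f and replacing the label of e by l(e) + l(f). Then wt(E') = wt(E) and ct^k_R(E') ≥ ct^k_R(E). -/
import Mathlib


/-- An `R`-labelled directed graph: vertices, edges, source/target maps and a label map. -/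
structure LGraph (R : Type) where
  V : Type
  E : Type
  s : E → V
  t : E → V
  l : E → R

namespace LGraph

variable {R : Type}

/-- `p = (e₁, …, e_k)` is a path of length `k`: `t eᵢ = s eᵢ₊₁` for `1 ≤ i < k`. -/
def IsPath (G : LGraph R) {k : ℕ} (p : Fin k → G.E) : Prop :=
  ∀ (i : ℕ) (hi : i + 1 < k), G.t (p ⟨i, by omega⟩) = G.s (p ⟨i + 1, hi⟩)

/-- A loop is a (nonempty) path whose source equals its target. -/
def IsLoop (G : LGraph R) {k : ℕ} (p : Fin k → G.E) : Prop :=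
  G.IsPath p ∧ ∃ hk : 0 < k, G.s (p ⟨0, hk⟩) = G.t (p ⟨k - 1, by omega⟩)

/-- No repeated edges: edges are determined by their source and target. -/
def NoRepeats (G : LGraph R) : Prop :=
  ∀ e f : G.E, G.s e = G.s f → G.t e = G.t f → e = f

/-- The weight of a labelled graph: the sum of all labels. -/
noncomputable def wt [CommSemiring R] (G : LGraph R) : R :=
  ∑ᶠ e : G.E, G.l e

/-- The `k`-content of a labelled graph: the sum, over all paths `p` of length `k`,
of the product of the labels of the edges of `p`. -/
noncomputable def ct [CommSemiring R] (G : LGraph R) (k : ℕ) : R :=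
  ∑ᶠ p : {p : Fin k → G.E // G.IsPath p}, ∏ i, G.l (p.1 i)

/-- The Chirvasitu property for `k`-paths: every two edges belong to a common
path of length `k`. -/
def Chirvasitu (G : LGraph R) (k : ℕ) : Prop :=
  ∀ e f : G.E, ∃ p : Fin k → G.E, G.IsPath p ∧ (∃ i, p i = e) ∧ (∃ i, p i = f)

end LGraph

private theorem pow_aux (a b : ℝ) (ha : 0 ≤ a) (hb : 0 ≤ b) (m : ℕ) (hm : 1 ≤ m) :
    a ^ m + b * a ^ (m - 1) ≤ (a + b) ^ m := by
  obtain ⟨n, rfl⟩ : ∃ n, m = n + 1 := ⟨m - 1, by omega⟩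
  simp only [Nat.add_sub_cancel]
  calc a ^ (n + 1) + b * a ^ n = a ^ n * (a + b) := by ring
    _ ≤ (a + b) ^ n * (a + b) := by
        have : a ^ n ≤ (a + b) ^ n := pow_le_pow_left₀ ha (by linarith) n
        nlinarith
    _ = (a + b) ^ (n + 1) := (pow_succ _ _).symm


/-- If no `k`-path of `G` contains both edges `e` and `f`, and the
`e`-exclusive content sum over the `k`-paths through `e` dominates the `f`-exclusive
content sum over the `k`-paths through `f`, then deleting `f` and adding its label to the
label of `e` preserves the weight and does not decrease the `k`-content. -/
theorem merge_edges_ct_le (S : Subsemiring ℝ) (hS : ∀ x ∈ S, 0 ≤ x) (k : ℕ) (hk : 1 ≤ k)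
    (G : LGraph ℝ) [Finite G.E] [DecidableEq G.E]
    (hlab : ∀ e, G.l e ∈ S) (hne : ∀ e, G.l e ≠ 0) (hnr : G.NoRepeats)
    (e f : G.E) (hef : e ≠ f)
    (hsep : ∀ p : Fin k → G.E, G.IsPath p → ¬ ((∃ i, p i = e) ∧ (∃ i, p i = f)))
    (hge : ∑ᶠ β : {p : Fin k → G.E // G.IsPath p ∧ ∃ i, p i = f},
             (∏ i, G.l (β.1 i)) / G.l f
           ≤ ∑ᶠ α : {p : Fin k → G.E // G.IsPath p ∧ ∃ i, p i = e},
             (∏ i, G.l (α.1 i)) / G.l e) :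
    (let G' : LGraph ℝ :=
      ⟨G.V, {x : G.E // x ≠ f}, fun x => G.s x.1, fun x => G.t x.1,
       fun x => if x.1 = e then G.l e + G.l f else G.l x.1⟩
     G'.wt = G.wt ∧ G.ct k ≤ G'.ct k) := by
  classical
  intro G'
  haveI : Fintype G.E := Fintype.ofFinite _
  haveI : Fintype G'.E := by show Fintype {x : G.E // x ≠ f}; infer_instance
  have hle : 0 < G.l e := (hS _ (hlab e)).lt_of_ne (Ne.symm (hne e))
  have hlf : 0 < G.l f := (hS _ (hlab f)).lt_of_ne (Ne.symm (hne f))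
  have hnonneg : ∀ x, 0 ≤ G.l x := fun x => hS _ (hlab x)
  set F : (Fin k → G.E) → ℝ := fun p => ∏ i, G.l (p i) with hF
  set F' : (Fin k → G.E) → ℝ :=
    fun p => ∏ i, (if p i = e then G.l e + G.l f else G.l (p i)) with hF'
  set P : Finset (Fin k → G.E) := Finset.univ.filter (fun p => G.IsPath p) with hP
  set Pf : Finset (Fin k → G.E) :=
    Finset.univ.filter (fun p => G.IsPath p ∧ ∃ i, p i = f) with hPf
  set Pe : Finset (Fin k → G.E) :=
    Finset.univ.filter (fun p => G.IsPath p ∧ ∃ i, p i = e) with hPe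
  set Pnf : Finset (Fin k → G.E) :=
    Finset.univ.filter (fun p => G.IsPath p ∧ ∀ i, p i ≠ f) with hPnf
  set Pn : Finset (Fin k → G.E) :=
    Finset.univ.filter (fun p => (G.IsPath p ∧ ∀ i, p i ≠ f) ∧ ∀ i, p i ≠ e) with hPn
  -- weight part
  have hwt : G'.wt = G.wt := by
    have h1 : G'.wt = ∑ x ∈ Finset.univ.erase f,
        (if x = e then G.l e + G.l f else G.l x) := by
      show (∑ᶠ x : G'.E, G'.l x) = _
      rw [finsum_eq_sum_of_fintype]
      exact (Finset.sum_subtype (Finset.univ.erase f) (by simp)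
        (fun x => if x = e then G.l e + G.l f else G.l x)).symm
    have h2 : G.wt = ∑ x : G.E, G.l x := by
      show (∑ᶠ x : G.E, G.l x) = _
      rw [finsum_eq_sum_of_fintype]
    rw [h1, h2]
    have he : e ∈ Finset.univ.erase f := by simp [hef]
    rw [← Finset.add_sum_erase _ _ he, if_pos rfl]
    rw [← Finset.add_sum_erase _ (G.l) (Finset.mem_univ f),
        ← Finset.add_sum_erase _ (G.l) he]
    have : ∑ x ∈ (Finset.univ.erase f).erase e,
        (if x = e then G.l e + G.l f else G.l x)
        = ∑ x ∈ (Finset.univ.erase f).erase e, G.l x := by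
      refine Finset.sum_congr rfl fun x hx => ?_
      rw [if_neg (Finset.ne_of_mem_erase hx)]
    rw [this]; ring
  refine ⟨hwt, ?_⟩
  -- content: conversions of finsums to Finset sums
  rw [finsum_eq_sum_of_fintype, finsum_eq_sum_of_fintype] at hge
  have hctG : G.ct k = ∑ p ∈ P, F p := by
    show (∑ᶠ p : {p : Fin k → G.E // G.IsPath p}, ∏ i, G.l (p.1 i)) = _
    rw [finsum_eq_sum_of_fintype]
    exact (Finset.sum_subtype P (by simp [hP]) F).symm
  have hgePf : ∑ b ∈ Pf, F b / G.l f ≤ ∑ a ∈ Pe, F a / G.l e := by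
    rw [Finset.sum_subtype (p := fun p => G.IsPath p ∧ ∃ i, p i = f) Pf
          (by simp [hPf]) (fun p => F p / G.l f),
        Finset.sum_subtype (p := fun p => G.IsPath p ∧ ∃ i, p i = e) Pe
          (by simp [hPe]) (fun p => F p / G.l e)]
    exact hge
  -- equivalence between G'-paths and G-paths avoiding f
  have hctG' : G'.ct k = ∑ p ∈ Pnf, F' p := by
    show (∑ᶠ p : {p : Fin k → G'.E // G'.IsPath p}, ∏ i, G'.l (p.1 i)) = _
    rw [finsum_eq_sum_of_fintype]
    let eqv : {p : Fin k → G'.E // G'.IsPath p} ≃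
        {q : Fin k → G.E // G.IsPath q ∧ ∀ i, q i ≠ f} :=
      { toFun := fun p => ⟨fun i => (p.1 i).1, fun i hi => p.2 i hi, fun i => (p.1 i).2⟩
        invFun := fun q => ⟨fun i => ⟨q.1 i, q.2.2 i⟩, fun i hi => q.2.1 i hi⟩
        left_inv := fun p => rfl
        right_inv := fun q => rfl }
    have h := Fintype.sum_equiv eqv (fun p => ∏ i, G'.l (p.1 i)) (fun q => F' q.1)
      (fun p => rfl)
    exact h.trans (Finset.sum_subtype Pnf (by simp [hPnf]) F').symm
  -- splitting the sums
  have hsplit1 : ∑ p ∈ P, F p = ∑ p ∈ Pf, F p + ∑ p ∈ Pnf, F p := by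
    rw [← Finset.sum_filter_add_sum_filter_not P (fun p => ∃ i, p i = f) F]
    congr 1
    · congr 1; rw [hP, hPf, Finset.filter_filter]
    · congr 1; rw [hP, hPnf, Finset.filter_filter]
      exact Finset.filter_congr fun p _ => by simp [not_exists]
  have hPeF : Pnf.filter (fun p => ∃ i, p i = e) = Pe := by
    ext p
    simp only [hPnf, hPe, Finset.mem_filter, Finset.mem_univ, true_and, and_assoc]
    constructor
    · tauto
    · rintro ⟨hp, he'⟩
      exact ⟨hp, fun i hi => hsep p hp ⟨he', ⟨i, hi⟩⟩, he'⟩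
  have hsplit2 : ∑ p ∈ Pnf, F' p = ∑ p ∈ Pe, F' p + ∑ p ∈ Pn, F' p := by
    rw [← Finset.sum_filter_add_sum_filter_not Pnf (fun p => ∃ i, p i = e) F', hPeF]
    congr 1
    rw [hPnf, hPn, Finset.filter_filter]
    exact Finset.sum_congr (Finset.filter_congr fun p _ => by simp [not_exists]) fun _ _ => rfl
  have hPnFF : ∑ p ∈ Pn, F' p = ∑ p ∈ Pn, F p := by
    refine Finset.sum_congr rfl fun p hp => ?_
    simp only [hPn, Finset.mem_filter] at hp
    exact Finset.prod_congr rfl fun i _ => if_neg (hp.2.2 i)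
  -- pointwise key inequality on Pe
  have hkey : ∀ p ∈ Pe, F p + (G.l f / G.l e) * F p ≤ F' p := by
    intro p hp
    simp only [hPe, Finset.mem_filter, Finset.mem_univ, true_and] at hp
    obtain ⟨hpath, i₀, hi₀⟩ := hp
    set T : Finset (Fin k) := Finset.univ.filter (fun i => p i = e) with hT
    set m : ℕ := T.card with hm
    have hm1 : 1 ≤ m := by
      rw [hm, Nat.one_le_iff_ne_zero, Ne, Finset.card_eq_zero]
      intro h
      have : i₀ ∈ T := by simp [hT, hi₀]
      simp [h] at this
    set q : ℝ := ∏ i ∈ Finset.univ.filter (fun i => ¬ p i = e), G.l (p i) with hq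
    have hq0 : 0 ≤ q := Finset.prod_nonneg fun i _ => hnonneg _
    have hFp : F p = G.l e ^ m * q := by
      simp only [hF]
      rw [← Finset.prod_filter_mul_prod_filter_not Finset.univ (fun i => p i = e)
        (fun i => G.l (p i))]
      congr 1
      rw [Finset.prod_congr rfl (fun i hi => by
        rw [(Finset.mem_filter.mp hi).2]), Finset.prod_const, ← hT, ← hm]
    have hF'p : F' p = (G.l e + G.l f) ^ m * q := by
      simp only [hF']
      rw [← Finset.prod_filter_mul_prod_filter_not Finset.univ (fun i => p i = e)
        (fun i => if p i = e then G.l e + G.l f else G.l (p i))]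
      congr 1
      · rw [Finset.prod_congr rfl (fun i hi => by
          rw [if_pos (Finset.mem_filter.mp hi).2]), Finset.prod_const, ← hT, ← hm]
      · exact Finset.prod_congr rfl fun i hi => if_neg (Finset.mem_filter.mp hi).2
    have hpow : G.l e ^ m = G.l e ^ (m - 1) * G.l e := by
      rw [← pow_succ]; congr 1; omega
    have e1 : G.l f / G.l e * F p = G.l f * G.l e ^ (m - 1) * q := by
      rw [hFp, hpow]; field_simp
    calc F p + G.l f / G.l e * F p
        = (G.l e ^ m + G.l f * G.l e ^ (m - 1)) * q := by rw [e1, hFp]; ring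
      _ ≤ (G.l e + G.l f) ^ m * q :=
        mul_le_mul_of_nonneg_right (pow_aux _ _ hle.le hlf.le m hm1) hq0
      _ = F' p := hF'p.symm
  -- assemble
  have hsum1 : ∑ p ∈ Pe, (F p + (G.l f / G.l e) * F p) ≤ ∑ p ∈ Pe, F' p :=
    Finset.sum_le_sum hkey
  have hsum2 : ∑ p ∈ Pf, F p ≤ ∑ p ∈ Pe, (G.l f / G.l e) * F p := by
    have h1 : ∑ p ∈ Pf, F p = G.l f * ∑ b ∈ Pf, F b / G.l f := by
      rw [Finset.mul_sum]
      exact Finset.sum_congr rfl fun p _ => by field_simp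
    have h2 : ∑ p ∈ Pe, (G.l f / G.l e) * F p = G.l f * ∑ a ∈ Pe, F a / G.l e := by
      rw [Finset.mul_sum]
      exact Finset.sum_congr rfl fun p _ => by ring
    rw [h1, h2]
    exact mul_le_mul_of_nonneg_left hgePf hlf.le
  have hsplit1b : ∑ p ∈ Pnf, F p = ∑ p ∈ Pe, F p + ∑ p ∈ Pn, F p := by
    rw [← Finset.sum_filter_add_sum_filter_not Pnf (fun p => ∃ i, p i = e) F, hPeF]
    congr 1
    rw [hPnf, hPn, Finset.filter_filter]
    exact Finset.sum_congr (Finset.filter_congr fun p _ => by simp [not_exists]) fun _ _ => rfl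
  rw [Finset.sum_add_distrib] at hsum1
  rw [hctG, hctG', hsplit1, hsplit1b, hsplit2, hPnFF]
  linarith
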